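/- arXiv:math/0703228 — 2 statements merged into one kernel-verified Lean document; each statement's English description precedes it below -/
import Mathlib

section
/- Let N be a positive integer and let U, V be unitary N×N complex matrices with U^N = I, V^N = I and VU = e^{2πi/N}·UV, such that the subalgebra of M_N(ℂ) generated by U and V is all of M_N(ℂ). Then there exists a unitary N×N matrix Z such that Zᴴ U Z = T₁ and Zᴴ V Z = M₁, where T₁ is the cyclic shift matrix acting on ℂ^N (identified with functions on ZMod N) by (T₁f)(j) = f(j−1), and M₁ is the diagonal matrix with diagonal entries e^{2πij/N} for j = 0, 1, ..., N−1. -/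
/-!
Pick an eigenvector of `V`; its eigenvalue is an `N`-th root of unity `ω ^ k`, and by the
commutation relation `U ^ (N - k)` moves it to a unit vector `v` fixed by `V`. The same relation
makes `U ^ j v` an eigenvector of `V` with eigenvalue `ω ^ j`. These `N` eigenvalues are distinct
and `V` is unitary, so the vectors `U ^ j v`, `j ∈ ZMod N`, are orthonormal and are the columns of
a unitary `Z`. In this basis `U` is the cyclic shift (as `U ^ N = 1`) and `V` is `diag (ω ^ j)`.
-/

open Complex Matrix

/-- The cyclic shift matrix `T₁` on `ℂ^N ≅ (ZMod N → ℂ)`, acting by `(T₁f)(j) = f(j−1)`. -/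
noncomputable def shiftMatrix (N : ℕ) : Matrix (ZMod N) (ZMod N) ℂ :=
  Matrix.of fun j l => if l = j - 1 then 1 else 0

/-- The modulation matrix `M₁`, the diagonal matrix with entries `e^{2πij/N}`,
`j = 0, 1, ..., N−1`. -/
noncomputable def modMatrix (N : ℕ) : Matrix (ZMod N) (ZMod N) ℂ :=
  Matrix.diagonal fun j => Complex.exp (2 * Real.pi * Complex.I * ((j.val : ℂ) / (N : ℂ)))

open scoped ComplexOrder

namespace Matrix

theorem conjTranspose_mul_mul_apply {m n α : Type*} [Fintype m] [NonUnitalSemiring α]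
    [StarRing α] (Z : Matrix m n α) (M : Matrix m m α) (i j : n) :
    (Zᴴ * M * Z) i j = star (Zᵀ i) ⬝ᵥ (M *ᵥ Zᵀ j) := by
  simp only [mul_apply, dotProduct, mulVec, Finset.mul_sum, Finset.sum_mul, mul_assoc,
    conjTranspose_apply, transpose_apply, Pi.star_apply]
  exact Finset.sum_comm

variable {n : Type*} [Fintype n]

theorem exists_smul_star_dotProduct_eq_one {x : n → ℂ} (hx0 : x ≠ 0) :
    ∃ c : ℂ, star (c • x) ⬝ᵥ (c • x) = 1 := by
  obtain ⟨hr, him⟩ := Complex.pos_iff.mp (dotProduct_star_self_pos_iff.mpr hx0)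
  set r := (star x ⬝ᵥ x).re
  have hs : star x ⬝ᵥ x = r := Complex.ext rfl him.symm
  refine ⟨((√r)⁻¹ : ℝ), ?_⟩
  rw [star_smul, smul_dotProduct, dotProduct_smul, hs, smul_eq_mul, smul_eq_mul, RCLike.star_def,
    Complex.conj_ofReal, ← mul_assoc]
  norm_cast
  rw [← mul_inv, Real.mul_self_sqrt hr.le, inv_mul_cancel₀ hr.ne']

variable [DecidableEq n]

theorem exists_mulVec_eq_smul [Nonempty n] (A : Matrix n n ℂ) :
    ∃ μ : ℂ, ∃ x ≠ 0, A *ᵥ x = μ • x := by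
  obtain ⟨μ, hμ⟩ := Module.End.exists_eigenvalue (Matrix.toLin' A)
  obtain ⟨x, hx, hx0⟩ := hμ.exists_hasEigenvector
  exact ⟨μ, x, hx0, by simpa using Module.End.mem_eigenspace_iff.mp hx⟩

theorem pow_mulVec_of_mulVec_eq_smul {A : Matrix n n ℂ} {μ : ℂ} {x : n → ℂ}
    (hx : A *ᵥ x = μ • x) (m : ℕ) : A ^ m *ᵥ x = μ ^ m • x := by
  induction m with
  | zero => simp
  | succ m ih => rw [pow_succ, ← mulVec_mulVec, hx, mulVec_smul, ih, smul_smul, pow_succ']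

theorem pow_eq_one_of_mulVec_eq_smul {A : Matrix n n ℂ} {N : ℕ} (hA : A ^ N = 1) {μ : ℂ}
    {x : n → ℂ} (hx0 : x ≠ 0) (hx : A *ᵥ x = μ • x) : μ ^ N = 1 := by
  have h : μ ^ N • x = (1 : ℂ) • x := by
    rw [← pow_mulVec_of_mulVec_eq_smul hx, hA, one_mulVec, one_smul]
  exact smul_left_injective ℂ hx0 h

theorem mul_pow_eq_smul_pow_mul {U V : Matrix n n ℂ} {ω : ℂ} (h : V * U = ω • (U * V)) (m : ℕ) :
    V * U ^ m = ω ^ m • (U ^ m * V) := by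
  induction m with
  | zero => simp
  | succ m ih =>
    rw [pow_succ, ← mul_assoc, ih, smul_mul_assoc, mul_assoc, h, Matrix.mul_smul, smul_smul,
      ← mul_assoc, pow_succ]

theorem mulVec_pow_mulVec_of_mulVec_eq_smul {U V : Matrix n n ℂ} {ω μ : ℂ}
    (h : V * U = ω • (U * V)) {x : n → ℂ} (hx : V *ᵥ x = μ • x) (m : ℕ) :
    V *ᵥ (U ^ m *ᵥ x) = (ω ^ m * μ) • (U ^ m *ᵥ x) := by
  rw [mulVec_mulVec, mul_pow_eq_smul_pow_mul h, smul_mulVec, ← mulVec_mulVec, hx, mulVec_smul,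
    smul_smul]

theorem star_mulVec_dotProduct_mulVec {A : Matrix n n ℂ} (hA : A ∈ unitaryGroup n ℂ)
    (x y : n → ℂ) : star (A *ᵥ x) ⬝ᵥ (A *ᵥ y) = star x ⬝ᵥ y := by
  rw [star_mulVec, dotProduct_mulVec, vecMul_vecMul, ← star_eq_conjTranspose,
    mem_unitaryGroup_iff'.mp hA, vecMul_one]

theorem norm_eq_one_of_mulVec_eq_smul {A : Matrix n n ℂ} (hA : A ∈ unitaryGroup n ℂ) {μ : ℂ}
    {x : n → ℂ} (hx0 : x ≠ 0) (hx : A *ᵥ x = μ • x) : ‖μ‖ = 1 := by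
  have h := star_mulVec_dotProduct_mulVec hA x x
  rw [hx, star_smul, smul_dotProduct, dotProduct_smul, smul_eq_mul, smul_eq_mul, ← mul_assoc,
    RCLike.star_def, conj_mul'] at h
  have : ((‖μ‖ ^ 2 : ℝ) : ℂ) = 1 :=
    mul_right_cancel₀ (dotProduct_star_self_eq_zero.not.mpr hx0) (by simpa using h)
  have h2 : ‖μ‖ ^ 2 = 1 := by exact_mod_cast this
  exact (pow_eq_one_iff_of_nonneg (norm_nonneg μ) two_ne_zero).mp h2

theorem dotProduct_eq_zero_of_mulVec_eq_smul {A : Matrix n n ℂ} (hA : A ∈ unitaryGroup n ℂ)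
    {μ ν : ℂ} (hμν : μ ≠ ν) {x y : n → ℂ} (hx0 : x ≠ 0) (hx : A *ᵥ x = μ • x)
    (hy : A *ᵥ y = ν • y) : star x ⬝ᵥ y = 0 := by
  have h := star_mulVec_dotProduct_mulVec hA x y
  rw [hx, hy, star_smul, smul_dotProduct, dotProduct_smul, smul_eq_mul, smul_eq_mul, ← mul_assoc]
    at h
  have hμ : star μ * μ = 1 := by
    rw [RCLike.star_def, conj_mul', norm_eq_one_of_mulVec_eq_smul hA hx0 hx]; simp
  have hne : star μ * ν ≠ 1 := fun h1 => hμν (by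
    calc μ = star μ * ν * μ := by rw [h1, one_mul]
      _ = ν := by rw [mul_right_comm, hμ, one_mul])
  have : (star μ * ν - 1) * (star x ⬝ᵥ y) = 0 := by linear_combination h
  exact (mul_eq_zero.mp this).resolve_left (sub_ne_zero.mpr hne)

end Matrix

section Weyl

variable {n : Type*} [Fintype n] [DecidableEq n] {N : ℕ} {U V : Matrix n n ℂ} {ω : ℂ}

def weylBasis (U : Matrix n n ℂ) (v : n → ℂ) (j : ZMod N) : n → ℂ := U ^ j.val *ᵥ v

theorem mulVec_weylBasis [NeZero N] (hUN : U ^ N = 1) (v : n → ℂ) (j : ZMod N) :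
    U *ᵥ weylBasis U v j = weylBasis U v (j + 1) := by
  have hj : j + 1 = ((j.val + 1 : ℕ) : ZMod N) := by push_cast; rw [ZMod.natCast_zmod_val]
  rw [weylBasis, weylBasis, mulVec_mulVec, ← pow_succ', hj, ZMod.val_natCast,
    ← pow_eq_pow_mod _ hUN]

theorem mulVec_weylBasis_of_mul_eq_smul_mul (hcomm : V * U = ω • (U * V)) {v : n → ℂ}
    (hv : V *ᵥ v = v) (j : ZMod N) :
    V *ᵥ weylBasis U v j = ω ^ j.val • weylBasis U v j := by
  have hv' : V *ᵥ v = (1 : ℂ) • v := by rw [hv, one_smul]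
  rw [weylBasis, mulVec_pow_mulVec_of_mulVec_eq_smul hcomm hv', mul_one]

theorem star_weylBasis_dotProduct [NeZero N] (hU : U ∈ unitaryGroup n ℂ)
    (hV : V ∈ unitaryGroup n ℂ) (hω : IsPrimitiveRoot ω N) (hcomm : V * U = ω • (U * V))
    {v : n → ℂ} (hv : V *ᵥ v = v) (hv1 : star v ⬝ᵥ v = 1) (i j : ZMod N) :
    star (weylBasis U v i) ⬝ᵥ weylBasis U v j = if i = j then 1 else 0 := by
  split_ifs with hij
  · rw [hij, weylBasis, star_mulVec_dotProduct_mulVec (pow_mem hU _), hv1]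
  · have hne : ω ^ i.val ≠ ω ^ j.val := fun h =>
      hij (ZMod.val_injective N (hω.pow_inj (ZMod.val_lt i) (ZMod.val_lt j) h))
    have hi0 : weylBasis U v i ≠ 0 := by
      intro h
      have h1 := star_mulVec_dotProduct_mulVec (pow_mem hU i.val) v v
      rw [← weylBasis, h, hv1] at h1
      simp at h1
    exact dotProduct_eq_zero_of_mulVec_eq_smul hV hne hi0
      (mulVec_weylBasis_of_mul_eq_smul_mul hcomm hv i)
      (mulVec_weylBasis_of_mul_eq_smul_mul hcomm hv j)

theorem exists_star_dotProduct_eq_one_mulVec_eq_self [Nonempty n] [NeZero N] (hUN : U ^ N = 1)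
    (hVN : V ^ N = 1) (hω : IsPrimitiveRoot ω N) (hcomm : V * U = ω • (U * V)) :
    ∃ v : n → ℂ, star v ⬝ᵥ v = 1 ∧ V *ᵥ v = v := by
  obtain ⟨μ, x, hx0, hx⟩ := exists_mulVec_eq_smul V
  obtain ⟨k, hk, rfl⟩ := hω.eq_pow_of_pow_eq_one (pow_eq_one_of_mulVec_eq_smul hVN hx0 hx)
  set y := U ^ (N - k) *ᵥ x
  have hVy : V *ᵥ y = y := by
    rw [mulVec_pow_mulVec_of_mulVec_eq_smul hcomm hx, ← pow_add, Nat.sub_add_cancel hk.le,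
      hω.pow_eq_one, one_smul]
  have hUy : U ^ k *ᵥ y = x := by
    simp only [y]
    rw [mulVec_mulVec, ← pow_add, Nat.add_sub_of_le hk.le, hUN, one_mulVec]
  have hy0 : y ≠ 0 := fun h => hx0 (by rw [← hUy, h, mulVec_zero])
  obtain ⟨c, hc⟩ := exists_smul_star_dotProduct_eq_one hy0
  exact ⟨c • y, hc, by rw [mulVec_smul, hVy]⟩

end Weyl

theorem shiftMatrix_apply (N : ℕ) (i j : ZMod N) :
    shiftMatrix N i j = if i = j + 1 then 1 else 0 := by
  simp only [shiftMatrix, of_apply, eq_sub_iff_add_eq, eq_comm]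

theorem modMatrix_eq_diagonal_pow (N : ℕ) [NeZero N] :
    modMatrix N = diagonal fun j => exp (2 * Real.pi * I / N) ^ j.val := by
  simp only [modMatrix, ← exp_nat_mul, mul_div_assoc']
  congr! 3
  ring

theorem weyl_uniqueness_general (N : ℕ) [NeZero N] (U V : Matrix (ZMod N) (ZMod N) ℂ)
    (hU : U ∈ Matrix.unitaryGroup (ZMod N) ℂ) (hV : V ∈ Matrix.unitaryGroup (ZMod N) ℂ)
    (hUN : U ^ N = 1) (hVN : V ^ N = 1)
    (hcomm : V * U = Complex.exp (2 * Real.pi * Complex.I / (N : ℂ)) • (U * V)) :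
    ∃ Z ∈ Matrix.unitaryGroup (ZMod N) ℂ,
      Zᴴ * U * Z = shiftMatrix N ∧ Zᴴ * V * Z = modMatrix N := by
  set ω := exp (2 * Real.pi * I / N)
  have hω : IsPrimitiveRoot ω N := isPrimitiveRoot_exp N (NeZero.ne N)
  obtain ⟨v, hv1, hVv⟩ := exists_star_dotProduct_eq_one_mulVec_eq_self hUN hVN hω hcomm
  set Z := (of (weylBasis U v))ᵀ
  have hZ (M : Matrix (ZMod N) (ZMod N) ℂ) (i j : ZMod N) :
      (Zᴴ * M * Z) i j = star (weylBasis U v i) ⬝ᵥ (M *ᵥ weylBasis U v j) :=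
    conjTranspose_mul_mul_apply Z M i j
  have horth := star_weylBasis_dotProduct hU hV hω hcomm hVv hv1
  refine ⟨Z, ?_, ?_, ?_⟩
  · rw [mem_unitaryGroup_iff', star_eq_conjTranspose, ← Matrix.mul_one Zᴴ]
    ext i j
    rw [hZ, one_mulVec, horth, one_apply]
  · ext i j
    rw [hZ, mulVec_weylBasis hUN, horth, shiftMatrix_apply]
  · ext i j
    rw [hZ, mulVec_weylBasis_of_mul_eq_smul_mul hcomm hVv, dotProduct_smul, horth,
      modMatrix_eq_diagonal_pow, diagonal_apply]
    split_ifs with hij <;> simp [hij, ω]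

/-- **Weyl's theorem**: if `U, V` are unitary `N×N` matrices with `U^N = 1`, `V^N = 1` and
`VU = e^{2πi/N}·UV`, generating all of `M_N(ℂ)` as an algebra, then there is a unitary `Z`
with `Zᴴ U Z = T₁` and `Zᴴ V Z = M₁`. -/
theorem weyl_uniqueness (N : ℕ) [NeZero N] (U V : Matrix (ZMod N) (ZMod N) ℂ)
    (hU : U ∈ Matrix.unitaryGroup (ZMod N) ℂ) (hV : V ∈ Matrix.unitaryGroup (ZMod N) ℂ)
    (hUN : U ^ N = 1) (hVN : V ^ N = 1)
    (hcomm : V * U = Complex.exp (2 * Real.pi * Complex.I / (N : ℂ)) • (U * V))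
    (hgen : Algebra.adjoin ℂ ({U, V} : Set (Matrix (ZMod N) (ZMod N) ℂ)) = ⊤) :
    ∃ Z ∈ Matrix.unitaryGroup (ZMod N) ℂ,
      Zᴴ * U * Z = shiftMatrix N ∧ Zᴴ * V * Z = modMatrix N :=
  weyl_uniqueness_general N U V hU hV hUN hVN hcomm
end

section
/- Löwdin orthogonalization: let M, N be positive integers and let C be an M×N complex matrix whose columns are linearly independent (equivalently, CᴴC is positive definite). Define L = C · (CᴴC)^{−1/2}, where (CᴴC)^{−1/2} is the inverse of the unique positive-definite square root of CᴴC. Then LᴴL = I_N (the columns of L are orthonormal), and for every M×N complex matrix X with XᴴX = I_N one has ‖C − L‖_Fro ≤ ‖C − X‖_Fro, where ‖A‖_Fro = tr(AAᴴ)^{1/2} is the Frobenius norm. -/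
/-!
Write `C = L S` with `S = (CᴴC)^{1/2}` and `L = C S⁻¹`; then `LᴴL = S⁻¹ S S S⁻¹ = 1`.
For `X` with orthonormal columns, `‖C - X‖² = tr(CᴴC) + N - 2 Re tr(XᴴC)`, so `L` is a
minimizer as soon as `Re tr(Xᴴ L S) ≤ tr S = tr(Lᴴ L S)`. Factoring `S = BᴴB`, the difference
`2 (tr S - Re tr(Xᴴ L S))` is `‖(X - L) Bᴴ‖²`, which is nonnegative.
-/

open Complex Matrix
open scoped ComplexOrder

/-- The Frobenius norm `‖A‖_Fro = tr(AAᴴ)^{1/2}` of a complex matrix. -/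
noncomputable def frobeniusNorm {m n : Type*} [Fintype m] [Fintype n]
    (A : Matrix m n ℂ) : ℝ :=
  Real.sqrt (Matrix.trace (A * Aᴴ)).re

/-- The positive semidefinite square root of a positive semidefinite matrix
(as defined in Mathlib of December 2024; removed from Mathlib since). -/
noncomputable def Matrix.PosSemidef.sqrt {n : Type*} [Fintype n] [DecidableEq n] {𝕜 : Type*}
    [RCLike 𝕜] {A : Matrix n n 𝕜} (hA : A.PosSemidef) : Matrix n n 𝕜 :=
  hA.1.eigenvectorUnitary.1 * diagonal ((↑) ∘ (√·) ∘ hA.1.eigenvalues) *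
  (star hA.1.eigenvectorUnitary : Matrix n n 𝕜)

open scoped MatrixOrder

namespace Matrix

variable {m n 𝕜 : Type*} [Fintype m] [Fintype n] [RCLike 𝕜]

namespace PosSemidef

variable [DecidableEq n] {A : Matrix n n 𝕜}

lemma posSemidef_sqrt (hA : A.PosSemidef) : hA.sqrt.PosSemidef := by
  refine PosSemidef.mul_mul_conjTranspose_same (PosSemidef.diagonal fun i => ?_) _
  exact RCLike.ofReal_nonneg.mpr (Real.sqrt_nonneg _)

lemma sqrt_mul_self (hA : A.PosSemidef) : hA.sqrt * hA.sqrt = A := by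
  have hU : (star hA.1.eigenvectorUnitary : Matrix n n 𝕜) * hA.1.eigenvectorUnitary = 1 :=
    mem_unitaryGroup_iff'.mp hA.1.eigenvectorUnitary.2
  conv_rhs => rw [hA.1.spectral_theorem, Unitary.conjStarAlgAut_apply]
  simp only [sqrt, Matrix.mul_assoc]
  rw [← Matrix.mul_assoc _ (hA.1.eigenvectorUnitary : Matrix n n 𝕜), hU, Matrix.one_mul,
    ← Matrix.mul_assoc (diagonal _), diagonal_mul_diagonal]
  congr 3
  funext i
  simp only [Function.comp_apply, ← RCLike.ofReal_mul,
    Real.mul_self_sqrt (hA.eigenvalues_nonneg i)]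

end PosSemidef

lemma re_trace_conjTranspose (A : Matrix n n 𝕜) : RCLike.re Aᴴ.trace = RCLike.re A.trace := by
  rw [trace_conjTranspose, RCLike.star_def, RCLike.conj_re]

lemma conjTranspose_mul_self_mul_inv_eq_one [DecidableEq n] {C : Matrix m n 𝕜}
    {S : Matrix n n 𝕜} (hS : S.IsHermitian) (hSu : IsUnit S) (hSS : S * S = Cᴴ * C) :
    (C * S⁻¹)ᴴ * (C * S⁻¹) = 1 := by
  have hSdet : IsUnit S.det := (isUnit_iff_isUnit_det S).mp hSu
  rw [conjTranspose_mul, conjTranspose_nonsing_inv, hS.eq]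
  calc S⁻¹ * Cᴴ * (C * S⁻¹) = S⁻¹ * (S * S) * S⁻¹ := by simp only [hSS, Matrix.mul_assoc]
    _ = 1 := by rw [Matrix.mul_assoc, Matrix.mul_assoc, mul_nonsing_inv _ hSdet, Matrix.mul_one,
      nonsing_inv_mul _ hSdet]

lemma re_trace_sub_mul_conjTranspose_sub [DecidableEq n] (C : Matrix m n 𝕜)
    {X : Matrix m n 𝕜} (hX : Xᴴ * X = 1) :
    RCLike.re ((C - X) * (C - X)ᴴ).trace =
      RCLike.re (C * Cᴴ).trace + Fintype.card n - 2 * RCLike.re (Xᴴ * C).trace := by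
  have hXX : (X * Xᴴ).trace = Fintype.card n := by
    rw [trace_mul_comm, hX, trace_one]
  have hXC : RCLike.re (X * Cᴴ).trace = RCLike.re (Xᴴ * C).trace := by
    rw [← re_trace_conjTranspose, conjTranspose_mul, conjTranspose_conjTranspose, trace_mul_comm]
  have hCX : (C * Xᴴ).trace = (Xᴴ * C).trace := trace_mul_comm _ _
  simp only [conjTranspose_sub, Matrix.mul_sub, Matrix.sub_mul, trace_sub, map_sub,
    hXX, hXC, hCX, RCLike.natCast_re]
  ring

lemma re_trace_conjTranspose_mul_mul_le [DecidableEq n] {L X : Matrix m n 𝕜} {S : Matrix n n 𝕜}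
    (hL : Lᴴ * L = 1) (hX : Xᴴ * X = 1) (hS : S.PosSemidef) :
    RCLike.re (Xᴴ * L * S).trace ≤ RCLike.re S.trace := by
  obtain ⟨B, hB⟩ := CStarAlgebra.nonneg_iff_eq_star_mul_self.mp hS.nonneg
  have hGram : (X - L)ᴴ * (X - L) = (1 - Xᴴ * L) + (1 - Lᴴ * X) := by
    simp only [conjTranspose_sub, Matrix.mul_sub, Matrix.sub_mul, hL, hX]
    abel
  have hSym : RCLike.re (Lᴴ * X * S).trace = RCLike.re (Xᴴ * L * S).trace := by
    rw [← re_trace_conjTranspose, conjTranspose_mul, conjTranspose_mul, hS.isHermitian.eq,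
      conjTranspose_conjTranspose, trace_mul_comm S]
  have hNonneg : 0 ≤ RCLike.re ((X - L)ᴴ * (X - L) * S).trace := by
    have h := (posSemidef_conjTranspose_mul_self ((X - L) * Bᴴ)).trace_nonneg
    rw [conjTranspose_mul, conjTranspose_conjTranspose, Matrix.mul_assoc, trace_mul_comm B] at h
    simpa only [hB, star_eq_conjTranspose, Matrix.mul_assoc] using (RCLike.nonneg_iff.mp h).1
  rw [hGram] at hNonneg
  simp only [Matrix.add_mul, Matrix.sub_mul, Matrix.one_mul, trace_add, trace_sub, map_add,
    map_sub, hSym] at hNonneg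
  linarith

lemma re_trace_sub_mul_conjTranspose_sub_le [DecidableEq n] {L X : Matrix m n 𝕜}
    {S : Matrix n n 𝕜} (hS : S.PosSemidef) (hL : Lᴴ * L = 1) (hX : Xᴴ * X = 1) :
    RCLike.re ((L * S - L) * (L * S - L)ᴴ).trace ≤
      RCLike.re ((L * S - X) * (L * S - X)ᴴ).trace := by
  rw [re_trace_sub_mul_conjTranspose_sub _ hL, re_trace_sub_mul_conjTranspose_sub _ hX,
    ← Matrix.mul_assoc, ← Matrix.mul_assoc, hL, Matrix.one_mul]
  linarith [re_trace_conjTranspose_mul_mul_le hL hX hS]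

end Matrix

theorem loewdin_orthogonalization_general (M N : ℕ)
    (C : Matrix (Fin M) (Fin N) ℂ) (hC : (Cᴴ * C).PosDef) :
    (C * (hC.posSemidef.sqrt)⁻¹)ᴴ * (C * (hC.posSemidef.sqrt)⁻¹) = 1 ∧
      ∀ X : Matrix (Fin M) (Fin N) ℂ, Xᴴ * X = 1 →
        frobeniusNorm (C - C * (hC.posSemidef.sqrt)⁻¹) ≤ frobeniusNorm (C - X) := by
  set S := hC.posSemidef.sqrt
  have hS : S.PosSemidef := hC.posSemidef.posSemidef_sqrt
  have hSS : S * S = Cᴴ * C := hC.posSemidef.sqrt_mul_self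
  have hSu : IsUnit S := isUnit_mul_self_iff.mp (hSS ▸ hC.isUnit)
  have hL := conjTranspose_mul_self_mul_inv_eq_one hS.isHermitian hSu hSS
  have hLS : C * S⁻¹ * S = C :=
    nonsing_inv_mul_cancel_right _ _ ((isUnit_iff_isUnit_det S).mp hSu)
  refine ⟨hL, fun X hX => Real.sqrt_le_sqrt ?_⟩
  have h := re_trace_sub_mul_conjTranspose_sub_le hS hL hX
  rw [hLS] at h
  exact h

/-- **Löwdin orthogonalization**: let `C` be an `M×N` complex matrix with linearly
independent columns (equivalently, `CᴴC` is positive definite) and let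
`L = C·(CᴴC)^{−1/2}`, where `(CᴴC)^{1/2}` is the unique positive-semidefinite square root
of `CᴴC`. Then `LᴴL = 1` (the columns of `L` are orthonormal), and `L` minimizes the
Frobenius distance to `C` among all matrices `X` with orthonormal columns (`XᴴX = 1`). -/
theorem loewdin_orthogonalization (M N : ℕ) (hM : 0 < M) (hN : 0 < N)
    (C : Matrix (Fin M) (Fin N) ℂ) (hC : (Cᴴ * C).PosDef) :
    (C * (hC.posSemidef.sqrt)⁻¹)ᴴ * (C * (hC.posSemidef.sqrt)⁻¹) = 1 ∧
      ∀ X : Matrix (Fin M) (Fin N) ℂ, Xᴴ * X = 1 →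
        frobeniusNorm (C - C * (hC.posSemidef.sqrt)⁻¹) ≤ frobeniusNorm (C - X) :=
  loewdin_orthogonalization_general M N C hC
end
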